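/- Let 0 < p ≤ 1 and let μ : ℕ → [0,∞) be a nonincreasing sequence with ∑_{j≥0} μ_j^p/(1+j)^p < ∞. Then the infinite diagonal matrix M with diagonal entries μ_j belongs to ℓ∞⊗_pℓ∞ and ‖M‖_{ℓ∞⊗_pℓ∞}^p ≤ 2 ∑_{j≥0} μ_j^p/(1+j)^p. -/

import Mathlib

/-!
Cut `ℕ` into the dyadic blocks `B_k = {j | 2 ^ k ≤ j + 1 < 2 ^ (k + 1)}`, of size `2 ^ k`.
If `ζ` is a primitive `2 ^ k`-th root of unity, orthogonality of the characters `j ↦ ζ ^ (j t)`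
on `B_k` gives `diag (μ|B_k) = ∑_{t < 2 ^ k} (2 ^ (-k) μ_j ζ ^ (j t))_j ⊗ (ζ ^ (-j t))_j`,
whose `2 ^ k` rank-one terms have sup norms `2 ^ (-k) μ_{2 ^ k - 1}` and `1` because `μ` is
nonincreasing. The total cost `∑_k 2 ^ k (μ_{2 ^ k - 1} / 2 ^ k) ^ p` is bounded by Cauchy
condensation: the `k`-th term is at most twice the sum of `μ_j ^ p / (1 + j) ^ p` over
`⌊2 ^ k / 2⌋ ≤ j < 2 ^ k`.
-/

open scoped BigOperators

/-- The sup norm of a vector/sequence of complex numbers. -/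
noncomputable def supNorm {ι : Type*} (x : ι → ℂ) : ℝ := ⨆ i, ‖x i‖

/-- The set of values `(∑ₙ ‖xₙ‖_∞^p ‖yₙ‖_∞^p)^(1/p)` over all representations
`M j k = ∑ₙ xₙ(j) yₙ(k)` of the matrix `M` as a sum of rank-one matrices with
bounded rows/columns.  `M` lies in `ℓ∞ ⊗_p ℓ∞` iff this set is nonempty, and
`‖M‖_{ℓ∞⊗_pℓ∞}` is its infimum. -/
noncomputable def tensorReprVals {ι : Type*} (p : ℝ) (M : ι → ι → ℂ) : Set ℝ :=
  {c | ∃ x y : ℕ → ι → ℂ,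
    (∀ n, BddAbove (Set.range fun i => ‖x n i‖)) ∧
    (∀ n, BddAbove (Set.range fun i => ‖y n i‖)) ∧
    Summable (fun n => supNorm (x n) ^ p * supNorm (y n) ^ p) ∧
    (∀ i j, HasSum (fun n => x n i * y n j) (M i j)) ∧
    c = (∑' n, supNorm (x n) ^ p * supNorm (y n) ^ p) ^ (1 / p)}

open Finset

section TensorNorm

variable {ι κ : Type*} {p : ℝ} {M : ι → ι → ℂ}

lemma supNorm_nonneg (x : ι → ℂ) : 0 ≤ supNorm x :=
  Real.iSup_nonneg fun _ => norm_nonneg _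

lemma supNorm_eq_of_forall_le {x : ι → ℂ} {c : ℝ} (h : ∀ i, ‖x i‖ ≤ c) (i₀ : ι)
    (h₀ : ‖x i₀‖ = c) : supNorm x = c :=
  have : Nonempty ι := ⟨i₀⟩
  le_antisymm (ciSup_le h) (h₀ ▸ le_ciSup ⟨c, Set.forall_mem_range.2 h⟩ i₀)

lemma nonneg_of_mem_tensorReprVals {c : ℝ} (hc : c ∈ tensorReprVals p M) : 0 ≤ c := by
  obtain ⟨x, y, -, -, -, -, rfl⟩ := hc
  exact Real.rpow_nonneg (tsum_nonneg fun n => mul_nonneg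
    (Real.rpow_nonneg (supNorm_nonneg _) _) (Real.rpow_nonneg (supNorm_nonneg _) _)) _

lemma tsum_rpow_mem_tensorReprVals [Countable κ] [Infinite κ] (x y : κ → ι → ℂ)
    (hx : ∀ n, BddAbove (Set.range fun i => ‖x n i‖))
    (hy : ∀ n, BddAbove (Set.range fun i => ‖y n i‖))
    (hs : Summable fun n => supNorm (x n) ^ p * supNorm (y n) ^ p)
    (hM : ∀ i j, HasSum (fun n => x n i * y n j) (M i j)) :
    (∑' n, supNorm (x n) ^ p * supNorm (y n) ^ p) ^ (1 / p) ∈ tensorReprVals p M := by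
  obtain ⟨e⟩ := nonempty_equiv_of_countable (α := ℕ) (β := κ)
  refine ⟨x ∘ e, y ∘ e, fun n => hx (e n), fun n => hy (e n), e.summable_iff.2 hs,
    fun i j => e.hasSum_iff.2 (hM i j), ?_⟩
  rw [← e.tsum_eq]
  rfl

lemma sInf_tensorReprVals_rpow_le (hp : 0 < p) {S : ℝ} (hS : 0 ≤ S)
    (h : S ^ (1 / p) ∈ tensorReprVals p M) : sInf (tensorReprVals p M) ^ p ≤ S := calc
  sInf (tensorReprVals p M) ^ p ≤ (S ^ (1 / p)) ^ p :=
    Real.rpow_le_rpow (Real.sInf_nonneg fun _ => nonneg_of_mem_tensorReprVals)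
      (csInf_le ⟨0, fun _ => nonneg_of_mem_tensorReprVals⟩ h) hp.le
  _ = S := by rw [← Real.rpow_mul hS, one_div_mul_cancel hp.ne', Real.rpow_one]

end TensorNorm

lemma IsPrimitiveRoot.sum_range_pow_mul_inv_pow {K : Type*} [Field K] {ζ : K} {N : ℕ}
    (hζ : IsPrimitiveRoot ζ N) (i j : ℕ) :
    ∑ t ∈ range N, (ζ ^ i * (ζ ^ j)⁻¹) ^ t = if i ≡ j [MOD N] then (N : K) else 0 := by
  rcases N.eq_zero_or_pos with rfl | hN
  · simp
  have hζ0 : ζ ≠ 0 := hζ.ne_zero hN.ne'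
  have hpow : ζ ^ i = ζ ^ j ↔ i ≡ j [MOD N] := by
    rw [hζ.eq_orderOf]; exact (hζ.isOfFinOrder hN.ne').pow_eq_pow_iff_modEq
  split_ifs with hij
  · simp [hpow.2 hij, hζ0]
  · have hz : ζ ^ i * (ζ ^ j)⁻¹ ≠ 1 := fun h =>
      hij (hpow.1 (mul_inv_eq_one₀ (pow_ne_zero _ hζ0) |>.1 h))
    have hzN : (ζ ^ i * (ζ ^ j)⁻¹) ^ N = 1 := by
      rw [mul_pow, inv_pow, ← pow_mul, ← pow_mul, pow_mul', pow_mul', hζ.pow_eq_one]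
      simp
    rw [geom_sum_eq hz, hzN, sub_self, zero_div]

section Condensation

lemma sum_range_sum_Ico_two_pow {M : Type*} [AddCommMonoid M] (f : ℕ → M) (K : ℕ) :
    ∑ k ∈ range K, ∑ j ∈ Ico (2 ^ k / 2) (2 ^ k), f j =
      ∑ j ∈ range (2 ^ K / 2), f j := by
  induction K with
  | zero => simp
  | succ K ih =>
    rw [sum_range_succ, ih, sum_range_add_sum_Ico _ (Nat.div_le_self _ _), pow_succ,
      Nat.mul_div_cancel _ two_pos]

variable {g : ℕ → ℝ}

lemma two_pow_mul_le_two_mul_sum_Ico (hg : Antitone g) (hg0 : 0 ≤ g) (k : ℕ) :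
    ((2 ^ k : ℕ) : ℝ) * g (2 ^ k - 1) ≤ 2 * ∑ j ∈ Ico (2 ^ k / 2) (2 ^ k), g j := calc
  ((2 ^ k : ℕ) : ℝ) * g (2 ^ k - 1)
      ≤ ((2 * (2 ^ k - 2 ^ k / 2) : ℕ) : ℝ) * g (2 ^ k - 1) := by
    gcongr
    · exact hg0 _
    · omega
  _ = 2 * ∑ j ∈ Ico (2 ^ k / 2) (2 ^ k), g (2 ^ k - 1) := by
    rw [sum_const, Nat.card_Ico, nsmul_eq_mul]
    push_cast
    ring
  _ ≤ 2 * ∑ j ∈ Ico (2 ^ k / 2) (2 ^ k), g j := by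
    gcongr with j hj
    exact hg (by rw [mem_Ico] at hj; omega)

lemma sum_range_condensed_le (hg : Antitone g) (hg0 : 0 ≤ g) (hs : Summable g) (K : ℕ) :
    ∑ k ∈ range K, ((2 ^ k : ℕ) : ℝ) * g (2 ^ k - 1) ≤ 2 * ∑' j, g j := calc
  ∑ k ∈ range K, ((2 ^ k : ℕ) : ℝ) * g (2 ^ k - 1)
      ≤ ∑ k ∈ range K, 2 * ∑ j ∈ Ico (2 ^ k / 2) (2 ^ k), g j :=
    sum_le_sum fun k _ => two_pow_mul_le_two_mul_sum_Ico hg hg0 k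
  _ = 2 * ∑ j ∈ range (2 ^ K / 2), g j := by rw [← mul_sum, sum_range_sum_Ico_two_pow]
  _ ≤ 2 * ∑' j, g j := by gcongr; exact hs.sum_le_tsum _ fun j _ => hg0 j

lemma exists_hasSum_condensed_le (hg : Antitone g) (hg0 : 0 ≤ g) (hs : Summable g) :
    ∃ S, HasSum (fun k => ((2 ^ k : ℕ) : ℝ) * g (2 ^ k - 1)) S ∧ S ≤ 2 * ∑' j, g j := by
  have h0 : ∀ k, 0 ≤ ((2 ^ k : ℕ) : ℝ) * g (2 ^ k - 1) := fun k =>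
    mul_nonneg (by positivity) (hg0 _)
  exact ⟨_, (summable_of_sum_range_le h0 (sum_range_condensed_le hg hg0 hs)).hasSum,
    Real.tsum_le_of_sum_range_le h0 (sum_range_condensed_le hg hg0 hs)⟩

end Condensation

lemma Antitone.rpow_div_one_add_rpow {m : ℕ → ℝ} (hm : Antitone m) (hm0 : ∀ j, 0 ≤ m j)
    {p : ℝ} (hp : 0 ≤ p) : Antitone fun j : ℕ => m j ^ p / (1 + j) ^ p := fun i j hij =>
  div_le_div₀ (Real.rpow_nonneg (hm0 i) p) (Real.rpow_le_rpow (hm0 j) (hm hij) hp)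
    (by positivity) (Real.rpow_le_rpow (by positivity) (by gcongr) hp)

lemma hasSum_sigma_fin_of_hasSum {n : ℕ → ℕ} {f : ℕ → ℝ} (hf : 0 ≤ f) {S : ℝ}
    (h : HasSum (fun k => (n k : ℝ) * f k) S) :
    HasSum (fun σ : Σ k, Fin (n k) => f σ.1) S := by
  have hfib : ∀ k, ∑' _ : Fin (n k), f k = n k * f k := by simp
  have hs : Summable fun σ : Σ k, Fin (n k) => f σ.1 :=
    (summable_sigma_of_nonneg fun σ => hf σ.1).2
      ⟨fun _ => Summable.of_finite, by simpa only [hfib] using h.summable⟩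
  convert hs.hasSum
  rw [hs.tsum_sigma' fun _ => Summable.of_finite, ← h.tsum_eq]
  exact (tsum_congr hfib).symm

section DyadicFourier

def dyadicBlock (j : ℕ) : ℕ := Nat.log 2 (j + 1)

lemma dyadicBlock_eq_iff {j k : ℕ} :
    dyadicBlock j = k ↔ 2 ^ k ≤ j + 1 ∧ j + 1 < 2 ^ (k + 1) :=
  Nat.log_eq_iff (Or.inr ⟨one_lt_two, j.succ_ne_zero⟩)

lemma dyadicBlock_two_pow_sub_one (k : ℕ) : dyadicBlock (2 ^ k - 1) = k := by
  have := k.one_le_two_pow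
  rw [dyadicBlock_eq_iff, pow_succ]
  omega

lemma two_pow_sub_one_le_of_dyadicBlock_eq {j k : ℕ} (h : dyadicBlock j = k) :
    2 ^ k - 1 ≤ j := by
  have := (dyadicBlock_eq_iff.1 h).1
  omega

lemma eq_of_modEq_of_dyadicBlock_eq {i j k : ℕ} (hi : dyadicBlock i = k)
    (hj : dyadicBlock j = k) (h : i ≡ j [MOD 2 ^ k]) : i = j := by
  rw [dyadicBlock_eq_iff, pow_succ] at hi hj
  obtain ⟨r, hr⟩ : ∃ r, i + 1 = r + 2 ^ k := ⟨i + 1 - 2 ^ k, by omega⟩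
  obtain ⟨s, hs⟩ : ∃ s, j + 1 = s + 2 ^ k := ⟨j + 1 - 2 ^ k, by omega⟩
  have hrs := h.add_right 1
  rw [hr, hs] at hrs
  have := (hrs.add_right_cancel' _).eq_of_lt_of_lt (by omega) (by omega)
  omega

open Complex in
noncomputable def dyadicRoot (k : ℕ) : ℂ := exp (2 * Real.pi * I / (2 ^ k : ℕ))

lemma isPrimitiveRoot_dyadicRoot (k : ℕ) : IsPrimitiveRoot (dyadicRoot k) (2 ^ k) :=
  Complex.isPrimitiveRoot_exp _ (by positivity)

lemma norm_dyadicRoot (k : ℕ) : ‖dyadicRoot k‖ = 1 :=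
  (isPrimitiveRoot_dyadicRoot k).norm'_eq_one (by positivity)

noncomputable def dyadicFourierLeft (a : ℕ → ℂ) (σ : Σ k : ℕ, Fin (2 ^ k))
    (j : ℕ) : ℂ :=
  if dyadicBlock j = σ.1 then a j / (2 ^ σ.1 : ℕ) * (dyadicRoot σ.1 ^ j) ^ (σ.2 : ℕ) else 0

noncomputable def dyadicFourierRight (σ : Σ k : ℕ, Fin (2 ^ k)) (j : ℕ) : ℂ :=
  if dyadicBlock j = σ.1 then ((dyadicRoot σ.1 ^ j) ^ (σ.2 : ℕ))⁻¹ else 0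

lemma hasSum_dyadicFourier (a : ℕ → ℂ) (i j : ℕ) :
    HasSum (fun σ => dyadicFourierLeft a σ i * dyadicFourierRight σ j)
      (if i = j then a i else 0) := by
  set k := dyadicBlock i with hk
  have hsupp : ∀ σ ∉ Set.range (Sigma.mk k),
      dyadicFourierLeft a σ i * dyadicFourierRight σ j = 0 := by
    rintro ⟨l, t⟩ hσ
    have : k ≠ l := by rintro rfl; exact hσ ⟨t, rfl⟩
    simp [dyadicFourierLeft, ← hk, this]
  refine (sigma_mk_injective.hasSum_iff hsupp).1 ?_
  convert hasSum_fintype _ using 1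
  simp only [Function.comp_def, dyadicFourierLeft, dyadicFourierRight, ← hk, if_true]
  by_cases hj : dyadicBlock j = k
  · set ζ := dyadicRoot k
    have hterm : ∀ t : ℕ, a i / (2 ^ k : ℕ) * (ζ ^ i) ^ t * ((ζ ^ j) ^ t)⁻¹
        = a i / (2 ^ k : ℕ) * (ζ ^ i * (ζ ^ j)⁻¹) ^ t := fun t => by
      rw [mul_pow, inv_pow, mul_assoc]
    simp only [hj, if_true, hterm]
    rw [← mul_sum, Fin.sum_univ_eq_sum_range (fun t => (ζ ^ i * (ζ ^ j)⁻¹) ^ t),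
      (isPrimitiveRoot_dyadicRoot k).sum_range_pow_mul_inv_pow]
    by_cases hij : i = j
    · subst hij
      rw [if_pos rfl, if_pos (Nat.ModEq.refl i)]
      field_simp
    · rw [if_neg hij, if_neg fun h => hij (eq_of_modEq_of_dyadicBlock_eq rfl hj h), mul_zero]
  · have hij : i ≠ j := by rintro rfl; exact hj rfl
    simp [hj, hij]

variable {a : ℕ → ℂ}

lemma norm_dyadicFourierLeft_le (ha : Antitone fun j => ‖a j‖) (σ : Σ k : ℕ, Fin (2 ^ k))
    (j : ℕ) : ‖dyadicFourierLeft a σ j‖ ≤ ‖a (2 ^ σ.1 - 1)‖ / 2 ^ σ.1 := by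
  unfold dyadicFourierLeft
  split_ifs with h
  · simp only [norm_mul, norm_div, norm_pow, norm_dyadicRoot, one_pow, mul_one,
      Nat.cast_pow, Nat.cast_ofNat, Complex.norm_ofNat]
    gcongr
    exact ha (two_pow_sub_one_le_of_dyadicBlock_eq h)
  · simp only [norm_zero]
    positivity

lemma norm_dyadicFourierRight_le (σ : Σ k : ℕ, Fin (2 ^ k)) (j : ℕ) :
    ‖dyadicFourierRight σ j‖ ≤ 1 := by
  unfold dyadicFourierRight
  split_ifs <;> simp [norm_dyadicRoot]

lemma supNorm_dyadicFourierLeft (ha : Antitone fun j => ‖a j‖) (σ : Σ k : ℕ, Fin (2 ^ k)) :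
    supNorm (dyadicFourierLeft a σ) = ‖a (2 ^ σ.1 - 1)‖ / 2 ^ σ.1 := by
  refine supNorm_eq_of_forall_le (norm_dyadicFourierLeft_le ha σ) (2 ^ σ.1 - 1) ?_
  simp [dyadicFourierLeft, dyadicBlock_two_pow_sub_one, norm_dyadicRoot]

lemma supNorm_dyadicFourierRight (σ : Σ k : ℕ, Fin (2 ^ k)) :
    supNorm (dyadicFourierRight σ) = 1 := by
  refine supNorm_eq_of_forall_le (norm_dyadicFourierRight_le σ) (2 ^ σ.1 - 1) ?_
  simp [dyadicFourierRight, dyadicBlock_two_pow_sub_one, norm_dyadicRoot]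

lemma supNorm_dyadicFourier_rpow (ha : Antitone fun j => ‖a j‖) (p : ℝ)
    (σ : Σ k : ℕ, Fin (2 ^ k)) :
    supNorm (dyadicFourierLeft a σ) ^ p * supNorm (dyadicFourierRight σ) ^ p
      = ‖a (2 ^ σ.1 - 1)‖ ^ p / (1 + ((2 ^ σ.1 - 1 : ℕ) : ℝ)) ^ p := by
  rw [supNorm_dyadicFourierLeft ha, supNorm_dyadicFourierRight, Real.one_rpow, mul_one,
    Real.div_rpow (norm_nonneg _) (by positivity), Nat.cast_pred (by positivity)]
  push_cast
  ring_nf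

end DyadicFourier

theorem diagonal_tensorReprVals_nonempty_and_rpow_sInf_le {p : ℝ} (hp : 0 < p) (a : ℕ → ℂ)
    (ha : Antitone fun j => ‖a j‖) (hs : Summable fun j : ℕ => ‖a j‖ ^ p / (1 + j) ^ p) :
    (tensorReprVals p fun j k : ℕ => if j = k then a j else 0).Nonempty ∧
      sInf (tensorReprVals p fun j k : ℕ => if j = k then a j else 0) ^ p ≤
        2 * ∑' j : ℕ, ‖a j‖ ^ p / (1 + j) ^ p := by
  have hg0 : 0 ≤ fun j : ℕ => ‖a j‖ ^ p / (1 + j) ^ p := fun j => by positivity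
  obtain ⟨S, hS, hS_le⟩ := exists_hasSum_condensed_le
    (ha.rpow_div_one_add_rpow (fun _ => norm_nonneg _) hp.le) hg0 hs
  have hcost : HasSum (fun σ : Σ k : ℕ, Fin (2 ^ k) =>
      supNorm (dyadicFourierLeft a σ) ^ p * supNorm (dyadicFourierRight σ) ^ p) S := by
    simpa only [supNorm_dyadicFourier_rpow ha] using
      hasSum_sigma_fin_of_hasSum (fun k => hg0 (2 ^ k - 1)) hS
  have hmem := tsum_rpow_mem_tensorReprVals _ _
    (fun σ => ⟨_, Set.forall_mem_range.2 (norm_dyadicFourierLeft_le ha σ)⟩)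
    (fun σ => ⟨_, Set.forall_mem_range.2 (norm_dyadicFourierRight_le σ)⟩)
    hcost.summable (hasSum_dyadicFourier a)
  rw [hcost.tsum_eq] at hmem
  exact ⟨⟨_, hmem⟩,
    (sInf_tensorReprVals_rpow_le hp (hS.nonneg fun _ => by positivity) hmem).trans hS_le⟩

theorem stmt2 (p : ℝ) (hp0 : 0 < p)
    (μ : ℕ → ℝ) (hnn : ∀ j, 0 ≤ μ j) (hmono : Antitone μ)
    (hsum : Summable fun j : ℕ => μ j ^ p / ((1 : ℝ) + j) ^ p) :
    (tensorReprVals p fun j k : ℕ => if j = k then (μ j : ℂ) else 0).Nonempty ∧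
      sInf (tensorReprVals p fun j k : ℕ => if j = k then (μ j : ℂ) else 0) ^ p ≤
        2 * ∑' j : ℕ, μ j ^ p / ((1 : ℝ) + j) ^ p := by
  have hnorm : ∀ j, ‖(μ j : ℂ)‖ = μ j := fun j => by
    rw [Complex.norm_real, Real.norm_of_nonneg (hnn j)]
  simpa only [hnorm] using diagonal_tensorReprVals_nonempty_and_rpow_sInf_le hp0 (fun j => μ j)
    (by simpa only [hnorm] using hmono) (by simpa only [hnorm] using hsum)
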